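/- Both inclusions among the three equivalences are proper: provided T contains at least 3 threads and X at least 3 variables, there exist runs u,v with u ≡_B v but not u ≡_M v, and there exist runs u',v' with u' ≡_rf v' but not u' ≡_B v'. -/

import Mathlib

namespace TraceTheory

inductive Op : Type
  | rd : Op
  | wr : Op
deriving DecidableEq

structure Lbl (T X : Type) : Type where
  thread : T
  op : Op
  var : X
deriving DecidableEq

/-- A concurrent program run: a finite string over the concurrent alphabet. -/
abbrev Run (T X : Type) := List (Lbl T X)

/-- An event of a run: a symbol together with its occurrence number. -/
abbrev Event (T X : Type) := Lbl T X × ℕ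

variable {T X : Type} [DecidableEq T] [DecidableEq X]

/-- Dependence: same thread, or same variable with at least one write. -/
def Dep (a b : Lbl T X) : Prop :=
  a.thread = b.thread ∨ (a.var = b.var ∧ (a.op = Op.wr ∨ b.op = Op.wr))

/-- The event at position `i` of run `w`. -/
def evAt (w : Run T X) (i : Fin w.length) : Event T X :=
  (w.get i, (w.take (i : ℕ)).count (w.get i))

def HasEv (w : Run T X) (e : Event T X) : Prop := ∃ i : Fin w.length, evAt w i = e

/-- `e` occurs (strictly) before `f` in `w`. -/
def EvBefore (w : Run T X) (e f : Event T X) : Prop :=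
  ∃ i j : Fin w.length, (i : ℕ) < (j : ℕ) ∧ evAt w i = e ∧ evAt w j = f

/-- Program order. -/
def po (w : Run T X) (e f : Event T X) : Prop :=
  e.1.thread = f.1.thread ∧ EvBefore w e f

/-- Reads-from: `f` is a read that observes the write `e` (the last write on
the same variable before `f`). -/
def rf (w : Run T X) (e f : Event T X) : Prop :=
  e.1.op = Op.wr ∧ f.1.op = Op.rd ∧ e.1.var = f.1.var ∧
  ∃ i j : Fin w.length, evAt w i = e ∧ evAt w j = f ∧ (i : ℕ) < (j : ℕ) ∧
    ∀ k : Fin w.length, (i : ℕ) < (k : ℕ) → (k : ℕ) < (j : ℕ) →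
      ¬ ((w.get k).op = Op.wr ∧ (w.get k).var = f.1.var)

/-- Every read is preceded by a write on the same variable. -/
def WellFormed (w : Run T X) : Prop :=
  ∀ j : Fin w.length, (w.get j).op = Op.rd →
    ∃ i : Fin w.length, (i : ℕ) < (j : ℕ) ∧ (w.get i).op = Op.wr ∧
      (w.get i).var = (w.get j).var

/-- Reads-from equivalence. -/
def RfEquiv (w w' : Run T X) : Prop :=
  w.Perm w' ∧ po w = po w' ∧ rf w = rf w'

/-- A single Mazurkiewicz swap of two adjacent independent symbols. -/
inductive MazSwap : Run T X → Run T X → Prop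
  | swap (u v : Run T X) (a b : Lbl T X) (h : ¬ Dep a b) :
      MazSwap (u ++ a :: b :: v) (u ++ b :: a :: v)

/-- Trace (Mazurkiewicz) equivalence: the smallest equivalence closed under swaps. -/
def MazEquiv (w w' : Run T X) : Prop := Relation.EqvGen MazSwap w w'

/-- The trace (happens-before) partial order of a run. -/
def MazOrder (w : Run T X) : Event T X → Event T X → Prop :=
  Relation.TransGen (fun e f => EvBefore w e f ∧ Dep e.1 f.1)

/-- `B` is a block word (one write followed by reads of the same variable) that is
valid as a contiguous segment whose suffix (remainder of the run) is `s`: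
no read after the block reads from the block's write. -/
def ValidBlockSeg (B s : Run T X) : Prop :=
  ∃ a rest, B = a :: rest ∧ a.op = Op.wr ∧
    (∀ b ∈ rest, b.op = Op.rd ∧ b.var = a.var) ∧
    ∀ j : Fin s.length, (s.get j).op = Op.rd → (s.get j).var = a.var →
      ∃ m : Fin s.length, (m : ℕ) < (j : ℕ) ∧ (s.get m).op = Op.wr ∧
        (s.get m).var = a.var

def ThreadsDisjoint (B B' : Run T X) : Prop :=
  ∀ a ∈ B, ∀ b ∈ B', a.thread ≠ b.thread

/-- A single block-equivalence step (clause (i): block swap, clause (ii): event swap). -/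
inductive BlkSwap : Run T X → Run T X → Prop
  | block (p B B' s : Run T X) (hB : ValidBlockSeg B (B' ++ s)) (hB' : ValidBlockSeg B' s)
      (hd : ThreadsDisjoint B B') :
      BlkSwap (p ++ B ++ B' ++ s) (p ++ B' ++ B ++ s)
  | single (p s : Run T X) (a b : Lbl T X) (ht : a.thread ≠ b.thread)
      (h : a.var ≠ b.var ∨ (a.op = Op.rd ∧ b.op = Op.rd)) :
      BlkSwap (p ++ a :: b :: s) (p ++ b :: a :: s)

/-- Block equivalence: smallest reflexive transitive relation closed under the swaps. -/
def BlkEquiv : Run T X → Run T X → Prop := Relation.ReflTransGen BlkSwap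

/-- The set of events of the segment `B` of a run, given the prefix `p` preceding it. -/
def segEvents (p B : Run T X) : Set (Event T X) :=
  { e | ∃ i : Fin B.length, e = (B.get i, ((p ++ B.take (i : ℕ)).count (B.get i))) }

/-- Block-equivalence steps where block swaps are restricted to blocks from `𝔹`. -/
inductive BlkSwapIn (𝔹 : Set (Set (Event T X))) : Run T X → Run T X → Prop
  | block (p B B' s : Run T X) (hB : ValidBlockSeg B (B' ++ s)) (hB' : ValidBlockSeg B' s)
      (hBmem : segEvents p B ∈ 𝔹) (hB'mem : segEvents (p ++ B) B' ∈ 𝔹)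
      (hd : ThreadsDisjoint B B') :
      BlkSwapIn 𝔹 (p ++ B ++ B' ++ s) (p ++ B' ++ B ++ s)
  | single (p s : Run T X) (a b : Lbl T X) (ht : a.thread ≠ b.thread)
      (h : a.var ≠ b.var ∨ (a.op = Op.rd ∧ b.op = Op.rd)) :
      BlkSwapIn 𝔹 (p ++ a :: b :: s) (p ++ b :: a :: s)

/-- Block equivalence restricted to the set of blocks `𝔹`. -/
def BlkEquivIn (𝔹 : Set (Set (Event T X))) : Run T X → Run T X → Prop :=
  Relation.ReflTransGen (BlkSwapIn 𝔹)

/-- A valid block of `w` (as a set of events): a write event together with exactly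
the reads of `w` that read from it. -/
def IsValidBlockOf (w : Run T X) (S : Set (Event T X)) : Prop :=
  ∃ e : Event T X, HasEv w e ∧ e.1.op = Op.wr ∧ S = insert e { f | rf w e f }

def ValidBlocks (w : Run T X) (𝔹 : Set (Set (Event T X))) : Prop :=
  ∀ S ∈ 𝔹, IsValidBlockOf w S

/-- Block `S` occurs as a contiguous subword of `u`. -/
def SerialIn (u : Run T X) (S : Set (Event T X)) : Prop :=
  ∃ p B s, u = p ++ B ++ s ∧ segEvents p B = S

/-- Liberal atomicity of a run `v` with respect to a set of blocks `𝔹`. -/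
def LiberallyAtomic (v : Run T X) (𝔹 : Set (Set (Event T X))) : Prop :=
  ∃ u, BlkEquivIn 𝔹 u v ∧ ∀ S ∈ 𝔹, SerialIn u S

/-- Conflict serializability of a run `v` with respect to a set of blocks `𝔹`. -/
def ConflictSerializable (v : Run T X) (𝔹 : Set (Set (Event T X))) : Prop :=
  ∃ u, MazEquiv u v ∧ ∀ S ∈ 𝔹, SerialIn u S

/-- The block-happens-before order `≺_𝔹`. -/
def Bhb (w : Run T X) (𝔹 : Set (Set (Event T X))) : Event T X → Event T X → Prop :=
  Relation.TransGen (fun e f =>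
    EvBefore w e f ∧ Dep e.1 f.1 ∧
    ¬ (e.1.thread ≠ f.1.thread ∧ ∃ B ∈ 𝔹, ∃ B' ∈ 𝔹, B ≠ B' ∧ e ∈ B ∧ f ∈ B'))

/-- The saturated order `⪻_𝔹` on events (`Sum.inl`) and blocks (`Sum.inr`). -/
inductive Sat (w : Run T X) (𝔹 : Set (Set (Event T X))) :
    (Event T X ⊕ Set (Event T X)) → (Event T X ⊕ Set (Event T X)) → Prop
  | base {e f : Event T X} : Bhb w 𝔹 e f → Sat w 𝔹 (Sum.inl e) (Sum.inl f)
  | toBlk {e f : Event T X} {B B' : Set (Event T X)} :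
      e.1.var = f.1.var → B ∈ 𝔹 → B' ∈ 𝔹 → e ∈ B → f ∈ B' → B ≠ B' →
      Sat w 𝔹 (Sum.inl e) (Sum.inl f) → Sat w 𝔹 (Sum.inr B) (Sum.inr B')
  | ofBlk {B B' : Set (Event T X)} {e f : Event T X} :
      Sat w 𝔹 (Sum.inr B) (Sum.inr B') → e ∈ B → f ∈ B' →
      Sat w 𝔹 (Sum.inl e) (Sum.inl f)

/-- The event part of the saturated order `⪻_𝔹`. -/
def SatEv (w : Run T X) (𝔹 : Set (Set (Event T X))) (e f : Event T X) : Prop :=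
  Sat w 𝔹 (Sum.inl e) (Sum.inl f)

def SameVarBlocks (B B' : Set (Event T X)) : Prop :=
  ∃ x : X, (∀ e ∈ B, e.1.var = x) ∧ (∀ e ∈ B', e.1.var = x)

/-- No two distinct blocks of `𝔹` on the same variable overlap in `v`. -/
def NoOverlap (v : Run T X) (𝔹 : Set (Set (Event T X))) : Prop :=
  ∀ B ∈ 𝔹, ∀ B' ∈ 𝔹, B ≠ B' → SameVarBlocks B B' →
    (∀ e ∈ B, ∀ f ∈ B', EvBefore v e f) ∨ (∀ e ∈ B, ∀ f ∈ B', EvBefore v f e)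

/-- `v` is a proper linearization (of the events of `w`) of the order `ord`. -/
def ProperLin (w : Run T X) (𝔹 : Set (Set (Event T X)))
    (ord : Event T X → Event T X → Prop) (v : Run T X) : Prop :=
  w.Perm v ∧ (∀ e f, ord e f → EvBefore v e f) ∧ NoOverlap v 𝔹


/-- `e` is causally ordered before `f` under reads-from equivalence:
`e` occurs before `f` in every reads-from equivalent run. -/
def CausOrd (w : Run T X) (e f : Event T X) : Prop :=
  ∀ w', RfEquiv w w' → EvBefore w' e f

/-- `e` and `f` are causally concurrent under reads-from equivalence. -/
def CausConc (w : Run T X) (e f : Event T X) : Prop :=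
  ¬ CausOrd w e f ∧ ¬ CausOrd w f e
end TraceTheory

/-!
Both separating examples move a write `w₂(x)` of a second thread from the end of a run to its
front. In `w₁(x) r₁(x) w₂(x)` the valid block `w₁(x) r₁(x)` swaps past the block `w₂(x)`, but
trace equivalence preserves the order of the writes to each variable. Inserting `w₁(y)` into the
block gives `w₁(x) w₁(y) r₁(x) w₂(x)`: program order and reads-from are unaffected by the move,
yet no block or event swap applies to this run at all, so it is block equivalent only to itself.
-/

namespace TraceTheory

open List

theorem _root_.List.pair_sublist_iff {α : Type*} {a b : α} {l : List α} :
    [a, b] <+ l ↔ ∃ i j : Fin l.length, i < j ∧ l[i] = a ∧ l[j] = b := by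
  constructor
  · intro h
    obtain ⟨is, hab, hij⟩ := sublist_eq_map_getElem h
    rcases is with _ | ⟨i, _ | ⟨j, _ | ⟨k, is⟩⟩⟩ <;> simp at hab
    exact ⟨i, j, by simpa using hij, hab.1.symm, hab.2.symm⟩
  · rintro ⟨i, j, hij, rfl, rfl⟩
    simpa using map_getElem_sublist (is := [i, j]) (by simpa using hij)

theorem _root_.List.pair_sublist_append_singleton {α : Type*} {a b c : α} {l : List α} :
    [a, b] <+ l ++ [c] ↔ [a, b] <+ l ∨ a ∈ l ∧ b = c := by
  simp only [sublist_append_iff, sublist_singleton]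
  constructor
  · rintro ⟨l₁, l₂, h, hl₁, rfl | rfl⟩
    · simp_all
    · rcases l₁ with _ | ⟨a', _ | ⟨a'', l₁⟩⟩ <;> simp_all
  · rintro (h | ⟨ha, rfl⟩)
    · exact ⟨_, [], by simp, h, Or.inl rfl⟩
    · exact ⟨[a], [b], rfl, by simpa using ha, Or.inr rfl⟩

variable {T X : Type}

theorem MazSwap.filter_eq {p : Lbl T X → Bool} (hp : ∀ a b, p a → p b → Dep a b)
    {u v : Run T X} (h : MazSwap u v) : u.filter p = v.filter p := by
  obtain ⟨u, v, a, b, hab⟩ := h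
  cases ha : p a <;> cases hb : p b <;> simp_all

theorem MazEquiv.filter_eq {p : Lbl T X → Bool} (hp : ∀ a b, p a → p b → Dep a b)
    {u v : Run T X} (h : MazEquiv u v) : u.filter p = v.filter p := by
  induction h with
  | rel _ _ h => exact h.filter_eq hp
  | refl => rfl
  | symm _ _ _ ih => exact ih.symm
  | trans _ _ _ _ _ ih₁ ih₂ => exact ih₁.trans ih₂

theorem MazEquiv.filter_write_eq [DecidableEq X] {u v : Run T X} (h : MazEquiv u v) (x : X) :
    u.filter (fun a => a.op = .wr ∧ a.var = x) = v.filter (fun a => a.op = .wr ∧ a.var = x) :=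
  h.filter_eq fun a b ha hb => by
    simp only [decide_eq_true_eq] at ha hb
    exact Or.inr ⟨ha.2.trans hb.2.symm, Or.inl ha.1⟩

theorem WellFormed.cons {l : Run T X} (hl : WellFormed l) {c : Lbl T X} (hc : c.op = .wr) :
    WellFormed (c :: l) := by
  rintro ⟨_ | j, hj⟩ hrd
  · simp [hc] at hrd
  · obtain ⟨⟨i, hi⟩, hij, hiw, hiv⟩ := hl ⟨j, by simpa using hj⟩ hrd
    exact ⟨⟨i + 1, by simpa using hi⟩, by simpa using hij, hiw, hiv⟩

theorem WellFormed.append_singleton {l : Run T X} (hl : WellFormed l) {c : Lbl T X}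
    (hc : c.op = .wr) : WellFormed (l ++ [c]) := by
  rintro ⟨j, hj⟩ hrd
  rw [length_append, length_singleton] at hj
  obtain hj | rfl := Nat.lt_succ_iff_lt_or_eq.1 hj
  · simp only [get_eq_getElem, getElem_append_left hj] at hrd ⊢
    obtain ⟨⟨i, hi⟩, hij, hiw, hiv⟩ := hl ⟨j, hj⟩ hrd
    exact ⟨⟨i, by simp only [length_append, length_singleton]; omega⟩, hij,
      by simpa [getElem_append_left hi] using hiw, by simpa [getElem_append_left hi] using hiv⟩
  · simp [hc] at hrd

theorem not_blkSwap_wr_wr_rd_wr {t₁ t₂ : T} {x y : X} (hxy : x ≠ y) (w : Run T X) :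
    ¬ BlkSwap [⟨t₁, .wr, x⟩, ⟨t₁, .wr, y⟩, ⟨t₁, .rd, x⟩, ⟨t₂, .wr, x⟩] w := by
  generalize hu : ([⟨t₁, .wr, x⟩, ⟨t₁, .wr, y⟩, ⟨t₁, .rd, x⟩, ⟨t₂, .wr, x⟩] : Run T X) = u
  rintro (⟨p, B, B', s, ⟨a, rest, rfl, ha, hrest, -⟩, ⟨a', rest', rfl, ha', -, -⟩, hd⟩ |
    ⟨p, s, a, b, hth, hvar⟩)
  -- The only adjacent events of distinct threads are `r₁(x) w₂(x)`; they conflict, and a block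
  -- ending in `r₁(x)` would have to contain `w₁(y)`.
  · simp only [append_assoc, cons_append, cons_eq_append_iff, append_eq_cons_iff, cons.injEq,
      nil_eq_append_iff, append_eq_nil_iff] at hu
    aesop (add norm simp ThreadsDisjoint)
  · simp only [cons_eq_append_iff, cons.injEq] at hu
    aesop

section

variable [DecidableEq T] [DecidableEq X]

theorem evAt_of_nodup {w : Run T X} (hw : w.Nodup) (i : Fin w.length) :
    evAt w i = (w[i], 0) := by
  refine Prod.ext rfl (count_eq_zero.2 fun hmem => ?_)
  obtain ⟨j, hj, hji⟩ := mem_take_iff_getElem.1 hmem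
  have := (hw.getElem_inj_iff (i := j) (j := i)).1 hji
  omega

theorem evBefore_iff_of_nodup {w : Run T X} (hw : w.Nodup) {e f : Event T X} :
    EvBefore w e f ↔ e.2 = 0 ∧ f.2 = 0 ∧ [e.1, f.1] <+ w := by
  simp only [EvBefore, evAt_of_nodup hw, pair_sublist_iff]
  constructor
  · rintro ⟨i, j, hij, rfl, rfl⟩
    exact ⟨rfl, rfl, i, j, hij, rfl, rfl⟩
  · rintro ⟨he, hf, i, j, hij, hi, hj⟩
    exact ⟨i, j, hij, Prod.ext hi he.symm, Prod.ext hj hf.symm⟩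

theorem po_append_singleton {l : Run T X} (hl : l.Nodup) {c : Lbl T X}
    (hc : ∀ a ∈ l, a.thread ≠ c.thread) : po (l ++ [c]) = po (c :: l) := by
  have hcl : c ∉ l := fun h => hc c h rfl
  have hnd₁ : (l ++ [c]).Nodup :=
    nodup_append.2 ⟨hl, nodup_singleton c, by simpa using fun a ha => ne_of_mem_of_not_mem ha hcl⟩
  have hnd₂ : (c :: l).Nodup := nodup_cons.2 ⟨hcl, hl⟩
  funext e f
  simp only [po, evBefore_iff_of_nodup hnd₁, evBefore_iff_of_nodup hnd₂,
    pair_sublist_append_singleton, sublist_cons_iff]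
  refine propext (and_congr_right fun hth => and_congr_right fun _ => and_congr_right fun _ =>
    or_congr_right ⟨?_, ?_⟩)
  · rintro ⟨he, rfl⟩
    exact absurd hth (hc _ he)
  · rintro ⟨_, ⟨rfl, rfl⟩, hf⟩
    exact absurd hth.symm (hc _ (singleton_sublist.1 hf))

theorem rf_wr_wr_rd_append_wr_eq {t₁ t₂ : T} {x y : X} (ht : t₁ ≠ t₂) (hxy : x ≠ y) :
    rf ([⟨t₁, .wr, x⟩, ⟨t₁, .wr, y⟩, ⟨t₁, .rd, x⟩] ++ [⟨t₂, .wr, x⟩]) =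
      rf (⟨t₂, .wr, x⟩ :: [⟨t₁, .wr, x⟩, ⟨t₁, .wr, y⟩, ⟨t₁, .rd, x⟩]) := by
  have hnd₁ : Nodup [(⟨t₁, .wr, x⟩ : Lbl T X), ⟨t₁, .wr, y⟩, ⟨t₁, .rd, x⟩, ⟨t₂, .wr, x⟩] := by
    simp [ht, hxy]
  have hnd₂ : Nodup [(⟨t₂, .wr, x⟩ : Lbl T X), ⟨t₁, .wr, x⟩, ⟨t₁, .wr, y⟩, ⟨t₁, .rd, x⟩] := by
    simp [hxy, Ne.symm ht]
  have h₁ (e f) : rf [⟨t₁, .wr, x⟩, ⟨t₁, .wr, y⟩, ⟨t₁, .rd, x⟩, ⟨t₂, .wr, x⟩] e f ↔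
      e = (⟨t₁, .wr, x⟩, 0) ∧ f = (⟨t₁, .rd, x⟩, 0) := by
    simp only [rf, evAt_of_nodup hnd₁]
    constructor
    · rintro ⟨hw, hr, hv, i, j, rfl, rfl, hij, hk⟩
      fin_cases i <;> fin_cases j <;> simp_all
    · rintro ⟨rfl, rfl⟩
      refine ⟨rfl, rfl, rfl, 0, 2, rfl, rfl, by simp, fun k hk₁ hk₂ => ?_⟩
      fin_cases k <;> simp_all [Ne.symm hxy]
  have h₂ (e f) : rf [⟨t₂, .wr, x⟩, ⟨t₁, .wr, x⟩, ⟨t₁, .wr, y⟩, ⟨t₁, .rd, x⟩] e f ↔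
      e = (⟨t₁, .wr, x⟩, 0) ∧ f = (⟨t₁, .rd, x⟩, 0) := by
    simp only [rf, evAt_of_nodup hnd₂]
    constructor
    · rintro ⟨hw, hr, hv, i, j, rfl, rfl, hij, hk⟩
      fin_cases i <;> fin_cases j <;> simp_all
      -- `w₂(x)` is overwritten by `w₁(x)` before the read
      exact hk 1 (by simp) (by simp) rfl rfl
    · rintro ⟨rfl, rfl⟩
      refine ⟨rfl, rfl, rfl, 1, 3, rfl, rfl, by simp, fun k hk₁ hk₂ => ?_⟩
      fin_cases k <;> simp_all [Ne.symm hxy]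
  funext e f
  simp only [cons_append, nil_append]
  exact propext ((h₁ e f).trans (h₂ e f).symm)

end

theorem exists_blkEquiv_not_mazEquiv [DecidableEq X] {t₁ t₂ : T} (ht : t₁ ≠ t₂) (x : X) :
    ∃ u v : Run T X, WellFormed u ∧ WellFormed v ∧ BlkEquiv u v ∧ ¬ MazEquiv u v := by
  have hl : WellFormed ([⟨t₁, .wr, x⟩, ⟨t₁, .rd, x⟩] : Run T X) := by
    intro j hj
    fin_cases j
    · simp at hj
    · exact ⟨0, by simp, rfl, rfl⟩
  have hswap := BlkSwap.block [] [⟨t₁, .wr, x⟩, ⟨t₁, .rd, x⟩] [⟨t₂, .wr, x⟩] []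
    ⟨_, _, rfl, rfl, by simp, fun j hj => by fin_cases j; simp at hj⟩
    ⟨_, _, rfl, rfl, by simp, fun j => j.elim0⟩ (by simp [ThreadsDisjoint, ht])
  refine ⟨[⟨t₁, .wr, x⟩, ⟨t₁, .rd, x⟩] ++ [⟨t₂, .wr, x⟩],
    ⟨t₂, .wr, x⟩ :: [⟨t₁, .wr, x⟩, ⟨t₁, .rd, x⟩], hl.append_singleton rfl, hl.cons rfl,
    .single (by simpa using hswap), fun h => ?_⟩
  simpa [ht] using h.filter_write_eq x

theorem exists_rfEquiv_not_blkEquiv [DecidableEq T] [DecidableEq X] {t₁ t₂ : T}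
    (ht : t₁ ≠ t₂) {x y : X} (hxy : x ≠ y) :
    ∃ u v : Run T X, WellFormed u ∧ WellFormed v ∧ RfEquiv u v ∧ ¬ BlkEquiv u v := by
  have hl : WellFormed ([⟨t₁, .wr, x⟩, ⟨t₁, .wr, y⟩, ⟨t₁, .rd, x⟩] : Run T X) := by
    intro j hj
    fin_cases j
    · simp at hj
    · simp at hj
    · exact ⟨0, by simp, rfl, rfl⟩
  refine ⟨[⟨t₁, .wr, x⟩, ⟨t₁, .wr, y⟩, ⟨t₁, .rd, x⟩] ++ [⟨t₂, .wr, x⟩],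
    ⟨t₂, .wr, x⟩ :: [⟨t₁, .wr, x⟩, ⟨t₁, .wr, y⟩, ⟨t₁, .rd, x⟩], hl.append_singleton rfl,
    hl.cons rfl, ⟨perm_append_singleton _ _, po_append_singleton (by simp [hxy]) (by simp [ht]),
      rf_wr_wr_rd_append_wr_eq ht hxy⟩, fun h => ?_⟩
  have hirr := not_blkSwap_wr_wr_rd_wr (t₁ := t₁) (t₂ := t₂) hxy
  have := (Relation.reflTransGen_iff_eq hirr).1 (by simpa [BlkEquiv] using h)
  simp [ht] at this

/-- both inclusions `≡_M ⊆ ≡_B ⊆ ≡_rf` are proper, provided there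
are at least 3 threads and 3 variables. -/
theorem block_equiv_inclusions_proper
    (T X : Type) [DecidableEq T] [DecidableEq X] [Fintype T] [Fintype X]
    (hT : 3 ≤ Fintype.card T) (hX : 3 ≤ Fintype.card X) :
    (∃ u v : Run T X, WellFormed u ∧ WellFormed v ∧ BlkEquiv u v ∧ ¬ MazEquiv u v) ∧
    (∃ u v : Run T X, WellFormed u ∧ WellFormed v ∧ RfEquiv u v ∧ ¬ BlkEquiv u v) := by
  obtain ⟨t₁, t₂, ht⟩ := Fintype.exists_pair_of_one_lt_card (α := T) (by omega)
  obtain ⟨x, y, hxy⟩ := Fintype.exists_pair_of_one_lt_card (α := X) (by omega)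
  exact ⟨exists_blkEquiv_not_mazEquiv ht x, exists_rfEquiv_not_blkEquiv ht hxy⟩

end TraceTheory
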